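/- Fix a ∈ ℕ^n with m = |a|, and let x ∈ T_a be the pure tensor whose m tensor factors are, in order, the images of the distinct basis vectors e_{n,1}, e_{n,2}, …, e_{n,m} under the quotient projections V → V/V_{i−1} corresponding to the respective tensor factors. Then the smallest G-invariant subspace of T_a containing x is T_a itself; that is, x generates T_a as a G-module. -/

import Mathlib

set_option linter.unusedVariables false
set_option maxHeartbeats 1000000

open scoped TensorProduct

/-- The infinite-dimensional vector space `V` with basis `e_{i,k}`, `i : Fin n`, `k : ℕ`. -/
abbrev V (n : ℕ) : Type := (Fin n × ℕ) →₀ ℂ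

/-- The basis vector `e_{i,k}`. -/
noncomputable def ee {n : ℕ} (x : Fin n × ℕ) : V n := Finsupp.single x 1

/-- The subspace `V_i`: the span of the basis vectors of the lowest `i` weights. -/
noncomputable def Vle (n i : ℕ) : Submodule ℂ (V n) :=
  Submodule.span ℂ {v | ∃ x : Fin n × ℕ, (x.1 : ℕ) < i ∧ v = ee x}

/-- The defining property of the group `G`: a flag-preserving automorphism of `V`
moving only finitely many basis vectors. -/
def GP {n : ℕ} (g : V n ≃ₗ[ℂ] V n) : Prop :=
  (∀ i : ℕ, Submodule.map (g : V n →ₗ[ℂ] V n) (Vle n i) ≤ Vle n i) ∧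
  ∃ F : Finset (Fin n × ℕ), (∀ x ∉ F, g (ee x) = ee x) ∧
    ∀ x ∈ F, g (ee x) ∈ Submodule.span ℂ {v | ∃ y ∈ F, v = ee y}

lemma spanF_eq (n : ℕ) (F : Finset (Fin n × ℕ)) :
    Submodule.span ℂ {v : V n | ∃ y ∈ F, v = ee y} =
      Finsupp.supported ℂ ℂ (F : Set (Fin n × ℕ)) := by
  rw [Finsupp.supported_eq_span_single]
  congr 1
  ext v
  constructor
  · rintro ⟨y, hy, rfl⟩
    exact ⟨y, hy, rfl⟩
  · rintro ⟨y, hy, rfl⟩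
    exact ⟨y, hy, rfl⟩

lemma mem_spanF {n : ℕ} {F : Finset (Fin n × ℕ)} {v : V n} :
    v ∈ Submodule.span ℂ {v : V n | ∃ y ∈ F, v = ee y} ↔ ∀ x ∉ F, v x = 0 := by
  rw [spanF_eq, Finsupp.mem_supported']
  exact ⟨fun h x hx => h x (by simpa using hx), fun h x hx => h x (by simpa using hx)⟩

lemma Vle_eq (n i : ℕ) :
    Vle n i = Finsupp.supported ℂ ℂ {x : Fin n × ℕ | (x.1 : ℕ) < i} := by
  rw [Finsupp.supported_eq_span_single, Vle]
  congr 1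
  ext v
  constructor
  · rintro ⟨y, hy, rfl⟩
    exact ⟨y, hy, rfl⟩
  · rintro ⟨y, hy, rfl⟩
    exact ⟨y, hy, rfl⟩

lemma mem_Vle {n i : ℕ} {v : V n} :
    v ∈ Vle n i ↔ ∀ x : Fin n × ℕ, i ≤ (x.1 : ℕ) → v x = 0 := by
  rw [Vle_eq, Finsupp.mem_supported']
  constructor
  · intro h x hx
    exact h x (by simpa using hx)
  · intro h x hx
    simp only [Set.mem_setOf_eq, not_lt] at hx
    exact h x hx

lemma maps_spanF {n : ℕ} (g : V n ≃ₗ[ℂ] V n) (F' F : Finset (Fin n × ℕ)) (hFF : F' ⊆ F)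
    (hfix : ∀ x ∉ F', g (ee x) = ee x)
    (hmov : ∀ x ∈ F', g (ee x) ∈ Submodule.span ℂ {v : V n | ∃ y ∈ F', v = ee y})
    {v : V n} (hv : v ∈ Submodule.span ℂ {v : V n | ∃ y ∈ F, v = ee y}) :
    g v ∈ Submodule.span ℂ {v : V n | ∃ y ∈ F, v = ee y} := by
  induction hv using Submodule.span_induction with
  | mem w hw =>
      obtain ⟨y, hy, rfl⟩ := hw
      by_cases hy' : y ∈ F'
      · exact Submodule.span_mono
          (fun u hu => by
            obtain ⟨z, hz, rfl⟩ := hu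
            exact ⟨z, hFF hz, rfl⟩) (hmov y hy')
      · rw [hfix y hy']
        exact Submodule.subset_span ⟨y, hy, rfl⟩
  | zero => rw [map_zero]; exact Submodule.zero_mem _
  | add u w _ _ hu hw => rw [map_add]; exact Submodule.add_mem _ hu hw
  | smul c u _ hu => rw [map_smul]; exact Submodule.smul_mem _ c hu

lemma fixes_supported {n : ℕ} (g : V n ≃ₗ[ℂ] V n) (F : Finset (Fin n × ℕ))
    (hfix : ∀ x ∉ F, g (ee x) = ee x) :
    ∀ v ∈ Finsupp.supported ℂ ℂ ((F : Set (Fin n × ℕ))ᶜ), g v = v := by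
  intro v hv
  rw [Finsupp.supported_eq_span_single] at hv
  induction hv using Submodule.span_induction with
  | mem w hw =>
      obtain ⟨y, hy, rfl⟩ := hw
      exact hfix y (by simpa using hy)
  | zero => rw [map_zero]
  | add u w _ _ hu hw => rw [map_add, hu, hw]
  | smul c u _ hu => rw [map_smul, hu]

lemma fixes_off {n : ℕ} (g : V n ≃ₗ[ℂ] V n) (F : Finset (Fin n × ℕ))
    (hfix : ∀ x ∉ F, g (ee x) = ee x)
    {v : V n} (hv : ∀ x ∈ F, v x = 0) : g v = v := by
  refine fixes_supported g F hfix v ?_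
  rw [Finsupp.mem_supported']
  intro x hx
  simp only [Set.mem_compl_iff, Finset.mem_coe, not_not] at hx
  exact hv x hx

lemma spanF_fd {n : ℕ} (F : Finset (Fin n × ℕ)) :
    FiniteDimensional ℂ (Submodule.span ℂ {v : V n | ∃ y ∈ F, v = ee y}) := by
  have h : {v : V n | ∃ y ∈ F, v = ee y} = (fun y => ee y) '' (F : Set (Fin n × ℕ)) := by
    ext v
    constructor
    · rintro ⟨y, hy, rfl⟩; exact ⟨y, hy, rfl⟩
    · rintro ⟨y, hy, rfl⟩; exact ⟨y, hy, rfl⟩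
  rw [h]
  exact FiniteDimensional.span_of_finite ℂ (F.finite_toSet.image _)

lemma symm_stable {n : ℕ} (A : V n ≃ₗ[ℂ] V n) (p : Submodule ℂ (V n))
    [FiniteDimensional ℂ p] (hstab : ∀ v ∈ p, A v ∈ p) :
    ∀ v ∈ p, A.symm v ∈ p := by
  intro v hv
  have hinj : Function.Injective (A.toLinearMap.restrict hstab) := by
    intro x y hxy
    apply Subtype.ext
    apply A.injective
    exact congrArg Subtype.val hxy
  obtain ⟨w, hw⟩ := ((LinearMap.injective_iff_surjective (K := ℂ) (V := p)).mp hinj) ⟨v, hv⟩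
  have h1 : A w.1 = v := congrArg Subtype.val hw
  have h2 : A.symm v = w.1 := by rw [← h1, LinearEquiv.symm_apply_apply]
  rw [h2]
  exact w.2

/-- The group `G` of flag-preserving automorphisms of `V` moving only finitely many
basis vectors. -/
noncomputable def G (n : ℕ) : Subgroup (V n ≃ₗ[ℂ] V n) where
  carrier := {g | GP g}
  one_mem' := by
    constructor
    · intro i v hv
      simpa using hv
    · exact ⟨∅, fun x _ => rfl, fun x hx => absurd hx (Finset.notMem_empty x)⟩
  mul_mem' := by
    rintro A B ⟨hA1, FA, hA2, hA3⟩ ⟨hB1, FB, hB2, hB3⟩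
    constructor
    · intro i v hv
      obtain ⟨w, hw, rfl⟩ := hv
      show A (B w) ∈ Vle n i
      exact hA1 i ⟨B w, hB1 i ⟨w, hw, rfl⟩, rfl⟩
    · refine ⟨FA ∪ FB, ?_, ?_⟩
      · intro x hx
        have hxa : x ∉ FA := fun h => hx (Finset.mem_union_left _ h)
        have hxb : x ∉ FB := fun h => hx (Finset.mem_union_right _ h)
        show A (B (ee x)) = ee x
        rw [hB2 x hxb, hA2 x hxa]
      · intro x hx
        show A (B (ee x)) ∈ _
        have hBx : B (ee x) ∈ Submodule.span ℂ {v : V n | ∃ y ∈ FA ∪ FB, v = ee y} := by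
          by_cases hxb : x ∈ FB
          · refine Submodule.span_mono (fun u hu => ?_) (hB3 x hxb)
            obtain ⟨z, hz, rfl⟩ := hu
            exact ⟨z, Finset.mem_union_right _ hz, rfl⟩
          · rw [hB2 x hxb]
            exact Submodule.subset_span ⟨x, hx, rfl⟩
        exact maps_spanF A FA (FA ∪ FB) Finset.subset_union_left hA2 hA3 hBx
  inv_mem' := by
    rintro A ⟨hA1, F, hfix, hmov⟩
    have hspan : ∀ v ∈ Submodule.span ℂ {v : V n | ∃ y ∈ F, v = ee y},
        A v ∈ Submodule.span ℂ {v : V n | ∃ y ∈ F, v = ee y} :=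
      fun v hv => maps_spanF A F F (le_refl F) hfix hmov hv
    haveI := spanF_fd F
    constructor
    · intro i v' hv'
      obtain ⟨v, hv, rfl⟩ := hv'
      show A.symm v ∈ Vle n i
      classical
      set w := A.symm v with hwdef
      set wF := Finsupp.filter (· ∈ F) w with hwF
      set wO := Finsupp.filter (fun x => ¬ x ∈ F) w with hwO
      have hsplit : wF + wO = w := Finsupp.filter_pos_add_filter_neg w _
      have hwFmem : wF ∈ Submodule.span ℂ {v : V n | ∃ y ∈ F, v = ee y} := by
        rw [mem_spanF]
        intro x hx
        exact Finsupp.filter_apply_neg _ _ hx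
      have hgO : A wO = wO := by
        refine fixes_off A F hfix ?_
        intro x hx
        exact Finsupp.filter_apply_neg _ _ (by simpa using hx)
      have hAw : A w = v := A.apply_symm_apply v
      have hv2 : A wF + wO = v := by
        rw [← hAw, ← hsplit, map_add, hgO]
      have hAwFspan : A wF ∈ Submodule.span ℂ {v : V n | ∃ y ∈ F, v = ee y} :=
        hspan wF hwFmem
      have hwOVle : wO ∈ Vle n i := by
        rw [mem_Vle]
        intro x hx
        by_cases hxF : x ∈ F
        · exact Finsupp.filter_apply_neg _ _ (by simpa using hxF)
        · have h1 : (A wF) x = 0 := by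
            rw [mem_spanF] at hAwFspan
            exact hAwFspan x hxF
          have h2 : (A wF) x + wO x = v x := by
            rw [← hv2]; rfl
          have h3 : v x = 0 := mem_Vle.mp hv x hx
          rw [h1, zero_add] at h2
          rw [h2, h3]
      have hAwFVle : A wF ∈ Vle n i := by
        have : A wF = v - wO := by rw [← hv2]; abel
        rw [this]
        exact Submodule.sub_mem _ hv hwOVle
      -- `A wF` lies in the finite-dimensional `A`-stable subspace `Vle n i ⊓ spanF F`
      set U := Vle n i ⊓ Submodule.span ℂ {v : V n | ∃ y ∈ F, v = ee y} with hU
      haveI : FiniteDimensional ℂ U :=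
        Submodule.finiteDimensional_of_le inf_le_right
      have hUstab : ∀ u ∈ U, A u ∈ U := by
        intro u hu
        exact ⟨hA1 i ⟨u, hu.1, rfl⟩, hspan u hu.2⟩
      have hwFU : wF ∈ U := by
        have := symm_stable A U hUstab (A wF) ⟨hAwFVle, hAwFspan⟩
        rwa [LinearEquiv.symm_apply_apply] at this
      have : w ∈ Vle n i := by
        rw [← hsplit]
        exact Submodule.add_mem _ hwFU.1 hwOVle
      exact this
    · refine ⟨F, ?_, ?_⟩
      · intro x hx
        show A.symm (ee x) = ee x
        exact (LinearEquiv.symm_apply_eq A).mpr (hfix x hx).symm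
      · intro x hx
        show A.symm (ee x) ∈ _
        exact symm_stable A _ hspan (ee x) (Submodule.subset_span ⟨x, hx, rfl⟩)

lemma mem_G {n : ℕ} (g : V n ≃ₗ[ℂ] V n) : g ∈ G n ↔ GP g := Iff.rfl

lemma Vle_mono (n : ℕ) {i j : ℕ} (h : i ≤ j) : Vle n i ≤ Vle n j :=
  Submodule.span_mono (fun v hv => by
    obtain ⟨x, hx, rfl⟩ := hv
    exact ⟨x, lt_of_lt_of_le hx h, rfl⟩)

lemma G_maps {n : ℕ} (g : G n) (i : ℕ) :
    Vle n i ≤ (Vle n i).comap (g.1 : V n →ₗ[ℂ] V n) := by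
  intro x hx
  exact g.2.1 i ⟨x, hx, rfl⟩

/-- The representation of `G` on the quotient `V / V_i`. -/
noncomputable def ρQ (n i : ℕ) : Representation ℂ (G n) (V n ⧸ Vle n i) where
  toFun g := Submodule.mapQ _ _ (g.1 : V n →ₗ[ℂ] V n) (G_maps g i)
  map_one' := by
    refine LinearMap.ext fun x => ?_
    obtain ⟨y, rfl⟩ := Submodule.Quotient.mk_surjective _ x
    simp [Submodule.mapQ_apply]
  map_mul' g h := by
    refine LinearMap.ext fun x => ?_
    obtain ⟨y, rfl⟩ := Submodule.Quotient.mk_surjective _ x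
    simp [Submodule.mapQ_apply]

/-- The index set of the tensor factors of `T_a`: the standard `[n]`-weighted set `[a]`. -/
abbrev WI {n : ℕ} (a : Fin n → ℕ) : Type := (i : Fin n) × Fin (a i)

/-- `T_a = ⨂_i (V/V_{i-1})^{⊗ a_i}`, with tensor factors indexed by `[a]`. -/
abbrev T (n : ℕ) (a : Fin n → ℕ) : Type := ⨂[ℂ] (x : WI a), (V n ⧸ Vle n x.1)

/-- The representation of `G` on `T_a`. -/
noncomputable def ρT (n : ℕ) (a : Fin n → ℕ) : Representation ℂ (G n) (T n a) where
  toFun g := PiTensorProduct.map fun x => ρQ n x.1 g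
  map_one' := by
    have h : (fun x : WI a => ρQ n x.1 1) = fun x : WI a => LinearMap.id := by
      funext x; exact map_one _
    show PiTensorProduct.map (fun x : WI a => ρQ n x.1 1) = 1
    rw [h, PiTensorProduct.map_id]
    rfl
  map_mul' g h := by
    have h2 : (fun x : WI a => ρQ n x.1 (g * h)) =
        fun x : WI a => (ρQ n x.1 g) ∘ₗ (ρQ n x.1 h) := by
      funext x; exact map_mul _ g h
    show PiTensorProduct.map (fun x : WI a => ρQ n x.1 (g * h)) = _
    rw [h2, PiTensorProduct.map_comp]
    rfl

/-- The canonical projection `V/V_i → V/V_j` for `i ≤ j`. -/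
noncomputable def qproj (n : ℕ) {i j : ℕ} (h : i ≤ j) :
    (V n ⧸ Vle n i) →ₗ[ℂ] (V n ⧸ Vle n j) :=
  Submodule.mapQ _ _ LinearMap.id (by
    intro v hv
    simpa using Vle_mono n h hv)

/-- Weight-nondecreasing bijections `[a] ≃ [b]`. -/
def IsWND {n : ℕ} {a b : Fin n → ℕ} (φ : WI a ≃ WI b) : Prop := ∀ x : WI a, x.1 ≤ (φ x).1

lemma IsWND.symm_le {n : ℕ} {a b : Fin n → ℕ} {φ : WI a ≃ WI b} (hφ : IsWND φ)
    (y : WI b) : ((φ.symm y).1 : ℕ) ≤ (y.1 : ℕ) := by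
  have h := hφ (φ.symm y)
  rw [Equiv.apply_symm_apply] at h
  exact h

/-- The map `φ_* : T_a → T_b` induced by a weight-nondecreasing bijection `φ : [a] → [b]`:
reindex the tensor factors along `φ` and apply the canonical projections
`V/V_{i-1} → V/V_{j-1}` factorwise. -/
noncomputable def ind (n : ℕ) {a b : Fin n → ℕ} (φ : WI a ≃ WI b) (hφ : IsWND φ) :
    T n a →ₗ[ℂ] T n b :=
  (PiTensorProduct.map fun y : WI b => qproj n (hφ.symm_le y)) ∘ₗ
    (PiTensorProduct.reindex ℂ (fun x : WI a => V n ⧸ Vle n x.1) φ).toLinearMap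

/-- A linear map `T_a → T_b` is `G`-equivariant if it commutes with the `G`-actions. -/
def IsGEquiv (n : ℕ) {a b : Fin n → ℕ} (f : T n a →ₗ[ℂ] T n b) : Prop :=
  ∀ g : G n, f ∘ₗ ρT n a g = ρT n b g ∘ₗ f

/-- The space of `G`-equivariant linear maps `T_a → T_b`. -/
noncomputable def EquivMaps (n : ℕ) (a b : Fin n → ℕ) :
    Submodule ℂ (T n a →ₗ[ℂ] T n b) where
  carrier := {f | IsGEquiv n f}
  add_mem' hf hf' g := by
    rw [LinearMap.add_comp, LinearMap.comp_add, hf g, hf' g]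
  zero_mem' g := by
    rw [LinearMap.zero_comp, LinearMap.comp_zero]
  smul_mem' c f hf g := by
    rw [LinearMap.smul_comp, LinearMap.comp_smul, hf g]

/-- The position (counting from `0`) of an element of the standard weighted set `[a]`
in its natural (weight-then-index) order. -/
def ord {n : ℕ} {a : Fin n → ℕ} (y : WI a) : ℕ :=
  (∑ j ∈ Finset.univ.filter (· < y.1), a j) + (y.2 : ℕ)

/-- The pure tensor in `T_a` whose factors are, in the natural order of the index set
`[a]`, the images of the distinct top-weight basis vectors `e_{n,1}, …, e_{n,m}`. -/
noncomputable def genx (n : ℕ) (hn : 1 ≤ n) (a : Fin n → ℕ) : T n a :=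
  PiTensorProduct.tprod ℂ
    (fun y : WI a => Submodule.Quotient.mk (ee (⟨n - 1, by omega⟩, ord y)))

section Aux

/-! ### Transvection-type elements of `G` -/

/-- The linear map `v ↦ v + v(s) • e_t`. -/
noncomputable def tvL {n : ℕ} (s t : Fin n × ℕ) : V n →ₗ[ℂ] V n :=
  LinearMap.id + (Finsupp.lapply s).smulRight (ee t)

lemma tvL_apply {n : ℕ} (s t : Fin n × ℕ) (v : V n) :
    tvL s t v = v + v s • ee t := rfl

/-- The linear map `v ↦ v - v(s) • e_t`. -/
noncomputable def tvL' {n : ℕ} (s t : Fin n × ℕ) : V n →ₗ[ℂ] V n :=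
  LinearMap.id - (Finsupp.lapply s).smulRight (ee t)

lemma tvL'_apply {n : ℕ} (s t : Fin n × ℕ) (v : V n) :
    tvL' s t v = v - v s • ee t := rfl

lemma ee_apply_ne {n : ℕ} {x y : Fin n × ℕ} (h : x ≠ y) : (ee x) y = 0 :=
  Finsupp.single_eq_of_ne' h

lemma ee_apply_self {n : ℕ} (x : Fin n × ℕ) : (ee x) x = 1 :=
  Finsupp.single_eq_same

/-- The transvection `v ↦ v + v(s) • e_t` as a linear automorphism (for `t ≠ s`). -/
noncomputable def tv {n : ℕ} (s t : Fin n × ℕ) (hst : t ≠ s) : V n ≃ₗ[ℂ] V n :=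
  LinearEquiv.ofLinear (tvL s t) (tvL' s t)
    (by
      refine LinearMap.ext fun v => ?_
      simp only [LinearMap.comp_apply, LinearMap.id_apply, tvL_apply, tvL'_apply]
      have h1 : (v - v s • ee t) s = v s := by
        simp [Finsupp.sub_apply, Finsupp.smul_apply, ee_apply_ne hst]
      rw [h1]; abel)
    (by
      refine LinearMap.ext fun v => ?_
      simp only [LinearMap.comp_apply, LinearMap.id_apply, tvL_apply, tvL'_apply]
      have h1 : (v + v s • ee t) s = v s := by
        simp [Finsupp.add_apply, Finsupp.smul_apply, ee_apply_ne hst]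
      rw [h1]; abel)

lemma tv_apply {n : ℕ} (s t : Fin n × ℕ) (hst : t ≠ s) (v : V n) :
    tv s t hst v = v + v s • ee t := rfl

lemma tv_mem_G {n : ℕ} (s t : Fin n × ℕ) (hst : t ≠ s)
    (hw : (t.1 : ℕ) ≤ (s.1 : ℕ)) : tv s t hst ∈ G n := by
  constructor
  · intro i v hv
    obtain ⟨w, hwv, rfl⟩ := hv
    show tv s t hst w ∈ Vle n i
    have hwv2 : ∀ x : Fin n × ℕ, i ≤ (x.1 : ℕ) → w x = 0 := mem_Vle.mp hwv
    rw [mem_Vle]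
    intro x hx
    rw [tv_apply]
    by_cases his : (s.1 : ℕ) < i
    · have hxt : x ≠ t := by
        intro h; subst h; omega
      simp [Finsupp.add_apply, Finsupp.smul_apply, ee_apply_ne (Ne.symm hxt), hwv2 x hx]
    · have hws : w s = 0 := hwv2 s (by omega)
      simp [Finsupp.add_apply, Finsupp.smul_apply, hws, hwv2 x hx]
  · refine ⟨{s, t}, ?_, ?_⟩
    · intro x hx
      have hxs : x ≠ s := by
        intro h; exact hx (by simp [h])
      show tv s t hst (ee x) = ee x
      rw [tv_apply, ee_apply_ne hxs]
      simp
    · intro x hx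
      show tv s t hst (ee x) ∈ _
      rw [tv_apply]
      refine Submodule.add_mem _ ?_ (Submodule.smul_mem _ _ ?_)
      · exact Submodule.subset_span ⟨x, by simpa using hx, rfl⟩
      · exact Submodule.subset_span ⟨t, by simp, rfl⟩

/-! ### Action of `G` on pure tensors -/

lemma rhoT_tprod {n : ℕ} (a : Fin n → ℕ) (g : G n) (f : ∀ _ : WI a, V n) :
    ρT n a g (PiTensorProduct.tprod ℂ
        (fun y : WI a => (Submodule.Quotient.mk (f y) : V n ⧸ Vle n y.1))) =
      PiTensorProduct.tprod ℂ
        (fun y : WI a => (Submodule.Quotient.mk (g.1 (f y)) : V n ⧸ Vle n y.1)) := by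
  show PiTensorProduct.map (fun y : WI a => ρQ n y.1 g) _ = _
  rw [PiTensorProduct.map_tprod]
  congr 1

/-- Notation for the pure tensor of images of basis vectors. -/
noncomputable def Pu {n : ℕ} (a : Fin n → ℕ) (u : WI a → Fin n × ℕ) : T n a :=
  PiTensorProduct.tprod ℂ
    (fun y : WI a => (Submodule.Quotient.mk (ee (u y)) : V n ⧸ Vle n y.1))

/-- Replacement step: change a single tensor factor. -/
lemma step_lemma {n : ℕ} {a : Fin n → ℕ} (p : Submodule ℂ (T n a))
    (hinv : ∀ (g : G n) (w : T n a), w ∈ p → ρT n a g w ∈ p)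
    (u : WI a → Fin n × ℕ) (y0 : WI a) (t : Fin n × ℕ)
    (hts : t ≠ u y0) (htw : (t.1 : ℕ) ≤ ((u y0).1 : ℕ))
    (hdist : ∀ y, y ≠ y0 → u y ≠ u y0)
    (hu : Pu a u ∈ p) :
    Pu a (Function.update u y0 t) ∈ p := by
  classical
  set g : G n := ⟨tv (u y0) t hts, tv_mem_G _ _ hts htw⟩ with hg
  have h1 := hinv g _ hu
  rw [Pu, rhoT_tprod] at h1
  set m : ∀ y : WI a, V n ⧸ Vle n y.1 :=
    fun y => (Submodule.Quotient.mk (ee (u y)) : V n ⧸ Vle n y.1) with hm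
  have h2 : (fun y : WI a => (Submodule.Quotient.mk (g.1 (ee (u y))) : V n ⧸ Vle n y.1)) =
      Function.update m y0 (m y0 + (Submodule.Quotient.mk (ee t) : V n ⧸ Vle n y0.1)) := by
    funext y
    by_cases hy : y = y0
    · subst hy
      rw [Function.update_self]
      have hgv : g.1 (ee (u y)) = ee (u y) + ee t := by
        show tv (u y) t hts (ee (u y)) = _
        rw [tv_apply, ee_apply_self]
        simp
      rw [hgv, hm]
      exact Submodule.Quotient.mk_add _
    · rw [Function.update_of_ne hy]
      have hgv : g.1 (ee (u y)) = ee (u y) := by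
        show tv (u y0) t hts (ee (u y)) = _
        rw [tv_apply, ee_apply_ne (hdist y hy)]
        simp
      rw [hgv]
  rw [h2, MultilinearMap.map_update_add, Function.update_eq_self] at h1
  have h3 : Pu a (Function.update u y0 t) =
      PiTensorProduct.tprod ℂ
        (Function.update m y0 (Submodule.Quotient.mk (ee t) : V n ⧸ Vle n y0.1)) := by
    rw [Pu]
    congr 1
    funext y
    by_cases hy : y = y0
    · subst hy; rw [Function.update_self, Function.update_self]
    · rw [Function.update_of_ne hy, Function.update_of_ne hy]
  rw [h3]
  have hu' : PiTensorProduct.tprod ℂ m ∈ p := hu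
  have e : (-1 : ℂ) • PiTensorProduct.tprod ℂ m + (1 : ℂ) • PiTensorProduct.tprod ℂ m = 0 := by
    rw [← add_smul]; simp
  rw [one_smul] at e
  have := p.add_mem (p.smul_mem (-1 : ℂ) hu') h1
  rwa [← add_assoc, e, zero_add] at this

/-- Iterated replacement: transport `Pu u` to `Pu w` when sources are injective,
weights do not increase, and sources avoid all targets. -/
lemma stage_lemma {n : ℕ} {a : Fin n → ℕ} (p : Submodule ℂ (T n a))
    (hinv : ∀ (g : G n) (w : T n a), w ∈ p → ρT n a g w ∈ p)
    (u w : WI a → Fin n × ℕ)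
    (hinj : Function.Injective u)
    (hw : ∀ y, ((w y).1 : ℕ) ≤ ((u y).1 : ℕ))
    (hsep : ∀ y y', u y ≠ w y')
    (hu : Pu a u ∈ p) : Pu a w ∈ p := by
  classical
  have key : ∀ s : Finset (WI a),
      Pu a (fun y => if y ∈ s then w y else u y) ∈ p := by
    intro s
    induction s using Finset.induction with
    | empty =>
        simp only [Finset.notMem_empty, if_false]
        exact hu
    | @insert y0 s hy0 ih =>
      have hupd : (fun y => if y ∈ insert y0 s then w y else u y) =
          Function.update (fun y => if y ∈ s then w y else u y) y0 (w y0) := by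
        funext y
        by_cases hy : y = y0
        · subst hy; simp
        · rw [Function.update_of_ne hy]
          simp [Finset.mem_insert, hy]
      by_cases hc : w y0 = u y0
      · have : (fun y => if y ∈ insert y0 s then w y else u y) =
            (fun y => if y ∈ s then w y else u y) := by
          rw [hupd]
          have h0 : (if y0 ∈ s then w y0 else u y0) = w y0 := by
            simp [hy0, hc]
          rw [← h0, Function.update_eq_self]
        rw [this]
        exact ih
      · rw [hupd]
        refine step_lemma p hinv _ y0 (w y0) ?_ ?_ ?_ ih
        · simpa [hy0] using hc
        · simpa [hy0] using hw y0
        · intro y hy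
          simp only [hy0, if_neg hy0]
          by_cases hys : y ∈ s
          · rw [if_pos hys]
            exact (hsep y0 y).symm
          · rw [if_neg hys]
            exact fun h => hy (hinj h)
  have := key Finset.univ
  simpa using this

/-! ### Injectivity of `ord` -/

lemma ord_lt {n : ℕ} {a : Fin n → ℕ} (y : WI a) :
    ord y < ∑ j ∈ Finset.univ.filter (· ≤ y.1), a j := by
  have hins : Finset.univ.filter (· ≤ y.1) =
      insert y.1 (Finset.univ.filter (· < y.1)) := by
    ext j
    simp [le_iff_lt_or_eq, or_comm, eq_comm]
  rw [hins, Finset.sum_insert (by simp)]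
  have := y.2.isLt
  rw [ord]
  omega

lemma sum_mono_ord {n : ℕ} {a : Fin n → ℕ} {i i' : Fin n} (h : i < i') :
    ∑ j ∈ Finset.univ.filter (· ≤ i), a j ≤ ∑ j ∈ Finset.univ.filter (· < i'), a j := by
  apply Finset.sum_le_sum_of_subset
  intro j hj
  simp only [Finset.mem_filter, Finset.mem_univ, true_and] at hj ⊢
  exact lt_of_le_of_lt hj h

lemma ord_strict {n : ℕ} {a : Fin n → ℕ} {y y' : WI a} (h : y.1 < y'.1) :
    ord y < ord y' := by
  have h1 := ord_lt y
  have h2 := sum_mono_ord (a := a) h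
  have h3 : ∑ j ∈ Finset.univ.filter (· < y'.1), a j ≤ ord y' := Nat.le_add_right _ _
  omega

lemma ord_inj {n : ℕ} {a : Fin n → ℕ} : Function.Injective (ord (n := n) (a := a)) := by
  intro y y' h
  rcases lt_trichotomy y.1 y'.1 with hlt | heq | hgt
  · exact absurd h (Nat.ne_of_lt (ord_strict hlt))
  · obtain ⟨i, k⟩ := y
    obtain ⟨i', k'⟩ := y'
    simp only at heq
    subst heq
    simp only [ord] at h
    have : (k : ℕ) = (k' : ℕ) := by omega
    simp [Fin.ext_iff, this]
  · exact absurd h.symm (Nat.ne_of_lt (ord_strict hgt))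

/-! ### Spanning -/

lemma quot_span_ee (n i : ℕ) :
    Submodule.span ℂ
        {v : V n ⧸ Vle n i | ∃ x : Fin n × ℕ, v = Submodule.Quotient.mk (ee x)} = ⊤ := by
  rw [eq_top_iff]
  rintro z -
  obtain ⟨v, rfl⟩ := Submodule.Quotient.mk_surjective _ z
  induction v using Finsupp.induction_linear with
  | zero => simp only [Submodule.Quotient.mk_zero]; exact Submodule.zero_mem _
  | add f g hf hg =>
      rw [Submodule.Quotient.mk_add]
      exact Submodule.add_mem _ hf hg
  | single x b =>
      have hs : Finsupp.single x b = b • ee x := by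
        rw [ee, Finsupp.smul_single, smul_eq_mul, mul_one]
      rw [hs, Submodule.Quotient.mk_smul]
      exact Submodule.smul_mem _ _ (Submodule.subset_span ⟨x, rfl⟩)

end Aux

/-- The vector `x = e_{n,1} ⊗ ⋯ ⊗ e_{n,m}` generates `T_a` as a `G`-module: the smallest
`G`-invariant subspace of `T_a` containing `x` is `T_a` itself. -/
theorem stmt12 (n : ℕ) (hn : 1 ≤ n) (a : Fin n → ℕ)
    (p : Submodule ℂ (T n a))
    (hinv : ∀ (g : G n) (w : T n a), w ∈ p → ρT n a g w ∈ p)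
    (hx : genx n hn a ∈ p) :
    p = ⊤ := by
  classical
  -- Step 1: every pure tensor of (images of) basis vectors lies in `p`.
  have key : ∀ t : WI a → Fin n × ℕ, Pu a t ∈ p := by
    intro t
    set M : ℕ := (Finset.univ.sup fun y : WI a => ord y) +
      (Finset.univ.sup fun y : WI a => (t y).2) + 1 with hM
    have hMord : ∀ y : WI a, ord y < M := by
      intro y
      have h : ord y ≤ Finset.univ.sup fun y : WI a => ord y :=
        Finset.le_sup (Finset.mem_univ y)
      omega
    have hMt : ∀ y : WI a, (t y).2 < M := by
      intro y
      have h : (t y).2 ≤ Finset.univ.sup fun y : WI a => (t y).2 :=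
        Finset.le_sup (f := fun y : WI a => (t y).2) (Finset.mem_univ y)
      omega
    set tp : Fin n := ⟨n - 1, by omega⟩ with htp
    set u0 : WI a → Fin n × ℕ := fun y => (tp, ord y) with hu0
    set u1 : WI a → Fin n × ℕ := fun y => (tp, M + ord y) with hu1
    have hx0 : Pu a u0 ∈ p := hx
    have s1 : Pu a u1 ∈ p := by
      refine stage_lemma p hinv u0 u1 ?_ ?_ ?_ hx0
      · intro y y' h
        apply ord_inj
        exact congrArg Prod.snd h
      · intro y; exact le_refl _
      · intro y y' h
        have h2 := congrArg Prod.snd h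
        simp only [hu0, hu1] at h2
        have := hMord y
        omega
    refine stage_lemma p hinv u1 t ?_ ?_ ?_ s1
    · intro y y' h
      apply ord_inj
      have h2 := congrArg Prod.snd h
      simp only [hu1] at h2
      omega
    · intro y
      have := (t y).1.isLt
      show ((t y).1 : ℕ) ≤ (tp : ℕ)
      simp only [htp]
      omega
    · intro y y' h
      have h2 := congrArg Prod.snd h
      simp only [hu1] at h2
      have := hMt y'
      omega
  -- Step 2: pure tensors of basis vectors span everything.
  have C : ∀ s : Finset (WI a), ∀ f : (y : WI a) → V n ⧸ Vle n y.1,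
      (∀ y, y ∉ s → ∃ x : Fin n × ℕ, f y = Submodule.Quotient.mk (ee x)) →
      PiTensorProduct.tprod ℂ f ∈ p := by
    intro s
    induction s using Finset.induction with
    | empty =>
        intro f hf
        choose x hx2 using fun y => hf y (Finset.notMem_empty y)
        have hfx : f = fun y => (Submodule.Quotient.mk (ee (x y)) : V n ⧸ Vle n y.1) :=
          funext hx2
        rw [hfx]
        exact key x
    | @insert y0 s hy0 ih =>
        intro f hf
        have main : ∀ v ∈ Submodule.span ℂ
            {v : V n ⧸ Vle n y0.1 | ∃ x : Fin n × ℕ, v = Submodule.Quotient.mk (ee x)},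
            PiTensorProduct.tprod ℂ (Function.update f y0 v) ∈ p := by
          intro v hv
          induction hv using Submodule.span_induction with
          | mem w hw =>
              obtain ⟨x, rfl⟩ := hw
              refine ih _ fun y hy => ?_
              by_cases hyy : y = y0
              · subst hyy
                exact ⟨x, Function.update_self _ _ _⟩
              · rw [Function.update_of_ne hyy]
                exact hf y (by simp [Finset.mem_insert, hyy, hy])
          | zero =>
              rw [MultilinearMap.map_update_zero]
              exact Submodule.zero_mem _
          | add u w _ _ hu' hw' =>
              rw [MultilinearMap.map_update_add]
              exact Submodule.add_mem _ hu' hw'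
          | smul c u _ hu' =>
              rw [MultilinearMap.map_update_smul]
              exact Submodule.smul_mem _ _ hu'
        have hv0 : f y0 ∈ Submodule.span ℂ
            {v : V n ⧸ Vle n y0.1 | ∃ x : Fin n × ℕ, v = Submodule.Quotient.mk (ee x)} := by
          rw [quot_span_ee]
          trivial
        have := main (f y0) hv0
        rwa [Function.update_eq_self] at this
  -- Conclude.
  rw [eq_top_iff, ← PiTensorProduct.span_tprod_eq_top, Submodule.span_le]
  rintro z ⟨f, rfl⟩
  exact C Finset.univ f (fun y hy => absurd (Finset.mem_univ y) hy)
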